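/- Let G be a finite connected arc-transitive simple graph, and consider the simple random walk X(t) on G, which is the random walk on the radio hypergraph R(G). For distinct vertices u and v, define the radio hitting time h̃(u,v) = E[inf{t ≥ 0 : X(t) ∈ N(v)} | X(0)=u], the first time the walk transmits from a neighbor of v. Then for every neighbor w of v, h̃(u,v) = h(u,v) − h(w,v), where h denotes hitting times of the simple random walk on G. -/

import Mathlib

open scoped ENNReal Classical
open Finset

namespace GraphWalk

variable {V : Type} [Fintype V] [DecidableEq V]

/-- One step of the simple random walk on a graph: from `v`, move to a uniformly chosen
neighbor. -/
noncomputable def stepProb (G : SimpleGraph V) (v u : V) : ℝ≥0∞ :=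
  if G.Adj v u then ((Finset.univ.filter fun x => G.Adj v x).card : ℝ≥0∞)⁻¹ else 0

/-- The vertex visited at time `s` along a trajectory `w` started at `v`. -/
def vAt (v : V) {t : ℕ} (w : Fin t → V) : ℕ → V
  | 0 => v
  | s + 1 => if h : s < t then w ⟨s, h⟩ else v

/-- Probability of a finite trajectory of the simple random walk started at `v`. -/
noncomputable def trajProb (G : SimpleGraph V) (v : V) {t : ℕ} (w : Fin t → V) : ℝ≥0∞ :=
  ∏ s : Fin t, stepProb G (vAt v w s) (w s)

/-- Probability that the length-`t` trajectory of the walk started at `v` satisfies `A`. -/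
noncomputable def pr (G : SimpleGraph V) (v : V) (t : ℕ)
    (A : (Fin t → V) → Prop) : ℝ≥0∞ :=
  ∑ w : Fin t → V, if A w then trajProb G v w else 0

/-- Hitting time of a set: `h(v,S) = E[inf{t ≥ 0 : X(t) ∈ S}]`, computed as
`∑_t Pr[X(s) ∉ S for all s ≤ t]`. -/
noncomputable def hitSet (G : SimpleGraph V) (v : V) (S : Set V) : ℝ≥0∞ :=
  ∑' t : ℕ, pr G v t (fun w => ∀ s : ℕ, s ≤ t → vAt v w s ∉ S)

/-- Hitting time `h(v,u)` of a vertex. -/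
noncomputable def hit (G : SimpleGraph V) (v u : V) : ℝ≥0∞ := hitSet G v {u}

/-- Radio hitting time `h̃(u,v) = E[inf{t ≥ 0 : X(t) ∈ N(v)}]` on the radio hypergraph
of `G`: the first time the walk transmits from a neighbor of `v`. -/
noncomputable def radioHit (G : SimpleGraph V) (u v : V) : ℝ≥0∞ :=
  hitSet G u (G.neighborSet v)

/-- Expected radio cover time from `v` on the radio hypergraph of `G`: vertex `u` has
heard the walk by time `t` iff `u = X(0)` or `X(s)` is a neighbor of `u` for some
`s < t`. -/
noncomputable def radioCoverFrom (G : SimpleGraph V) (v : V) : ℝ≥0∞ :=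
  ∑' t : ℕ, pr G v t
    (fun w => ∃ u : V, ¬(u = v ∨ ∃ s : ℕ, s < t ∧ G.Adj (vAt v w s) u))

/-- The radio cover time of the radio hypergraph of `G`. -/
noncomputable def radioCover (G : SimpleGraph V) : ℝ≥0∞ := ⨆ v : V, radioCoverFrom G v

end GraphWalk

/-- A simple graph is arc-transitive if its automorphism group acts transitively on
ordered pairs of adjacent vertices. -/
def ArcTransitive {V : Type} (G : SimpleGraph V) : Prop :=
  ∀ ⦃a b a' b' : V⦄, G.Adj a b → G.Adj a' b' →
    ∃ φ : G ≃g G, φ a = a' ∧ φ b = b'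
/-!
Starting from `u ≠ v`, the walk can only reach `v` through a neighbour of `v`, so it first enters
`N(v)` and then, by the Markov property at that (random) time, behaves like a fresh walk started at
the entry point `x`. Hence `h(u,v) = h̃(u,v) + ∑ₓ μ(x) h(x,v)`, where `μ` is the distribution of the
entry point. Arc-transitivity makes `h(x,v)` the same for every neighbour `x` of `v`, and `μ` is a
probability distribution because `h̃(u,v) < ∞` on a finite connected graph.
-/

open Filter Topology

theorem ENNReal.tsum_pow_div_ne_top {δ : ℝ≥0∞} (hδ : δ < 1) {n : ℕ} (hn : n ≠ 0) :
    ∑' t : ℕ, δ ^ (t / n) ≠ ⊤ := by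
  have : NeZero n := ⟨hn⟩
  have hprod : ∑' t : ℕ, δ ^ (t / n) = ∑' p : ℕ × Fin n, δ ^ p.1 :=
    (Nat.divModEquiv n).tsum_eq fun p : ℕ × Fin n => δ ^ p.1
  rw [hprod, ENNReal.tsum_prod (f := fun k (_ : Fin n) => δ ^ k)]
  simp only [tsum_fintype, sum_const, card_univ, Fintype.card_fin, nsmul_eq_mul]
  rw [ENNReal.tsum_mul_left, ENNReal.tsum_geometric]
  exact ENNReal.mul_ne_top (ENNReal.natCast_ne_top n)
    (ENNReal.inv_ne_top.2 (tsub_pos_of_lt hδ).ne')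

theorem ENNReal.tsum_mul_tsum_eq_tsum_sum_antidiagonal (f g : ℕ → ℝ≥0∞) :
    (∑' n, f n) * ∑' n, g n = ∑' n, ∑ p ∈ antidiagonal n, f p.1 * g p.2 := by
  simp_rw [← ENNReal.tsum_mul_right, ← ENNReal.tsum_mul_left]
  rw [← ENNReal.tsum_prod (f := fun s r => f s * g r),
    ← HasAntidiagonal.sigmaAntidiagonalEquivProd.tsum_eq, ENNReal.tsum_sigma']
  exact tsum_congr fun n => Finset.tsum_subtype (antidiagonal n) fun p => f p.1 * g p.2

namespace GraphWalk

section Positions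

variable {V : Type}

theorem vAt_succ (v : V) {t : ℕ} (w : Fin t → V) {s : ℕ} (h : s < t) :
    vAt v w (s + 1) = w ⟨s, h⟩ := by
  simp [vAt, h]

theorem vAt_comp {W : Type} (f : V → W) (v : V) {t : ℕ} (w : Fin t → V) (s : ℕ) :
    vAt (f v) (f ∘ w) s = f (vAt v w s) := by
  cases s with
  | zero => rfl
  | succ s => simp only [vAt]; split <;> rfl

theorem vAt_append_left (v : V) {s r : ℕ} (w₁ : Fin s → V) (w₂ : Fin r → V) {i : ℕ}
    (hi : i ≤ s) : vAt v (Fin.append w₁ w₂) i = vAt v w₁ i := by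
  cases i with
  | zero => rfl
  | succ i =>
    rw [vAt_succ v _ (by omega : i < s + r), vAt_succ v _ (by omega : i < s)]
    exact Fin.append_left w₁ w₂ ⟨i, _⟩

theorem vAt_append_right (v : V) {s r : ℕ} (w₁ : Fin s → V) (w₂ : Fin r → V) {j : ℕ}
    (hj : j ≤ r) : vAt v (Fin.append w₁ w₂) (s + j) = vAt (vAt v w₁ s) w₂ j := by
  cases j with
  | zero => exact vAt_append_left v w₁ w₂ le_rfl
  | succ j =>
    rw [← add_assoc, vAt_succ v _ (by omega : s + j < s + r), vAt_succ _ _ (by omega : j < r)]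
    exact Fin.append_right w₁ w₂ ⟨j, _⟩

theorem forall_le_vAt_append_iff (P : V → Prop) (v : V) {s r : ℕ} (w₁ : Fin s → V)
    (w₂ : Fin r → V) :
    (∀ i ≤ s + r, P (vAt v (Fin.append w₁ w₂) i)) ↔
      (∀ i ≤ s, P (vAt v w₁ i)) ∧ ∀ j ≤ r, P (vAt (vAt v w₁ s) w₂ j) := by
  refine ⟨fun h => ⟨fun i hi => ?_, fun j hj => ?_⟩, fun ⟨h₁, h₂⟩ i hi => ?_⟩
  · rw [← vAt_append_left v w₁ w₂ hi]
    exact h i (by omega)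
  · rw [← vAt_append_right v w₁ w₂ hj]
    exact h (s + j) (by omega)
  · rcases le_or_gt i s with his | his
    · rw [vAt_append_left v w₁ w₂ his]
      exact h₁ i his
    · obtain ⟨j, rfl⟩ := Nat.exists_eq_add_of_le his.le
      rw [vAt_append_right v w₁ w₂ (by omega)]
      exact h₂ j (by omega)

end Positions

variable {V : Type} [Fintype V] {G : SimpleGraph V}

section Steps

theorem stepProb_eq_degree (v u : V) :
    stepProb G v u = if G.Adj v u then ((G.degree v : ℕ) : ℝ≥0∞)⁻¹ else 0 := by
  rw [stepProb, ← SimpleGraph.card_neighborFinset_eq_degree, SimpleGraph.neighborFinset_eq_filter]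

theorem stepProb_ne_zero {v u : V} (h : G.Adj v u) : stepProb G v u ≠ 0 := by
  simp [stepProb, h]

theorem adj_of_stepProb_ne_zero {v u : V} (h : stepProb G v u ≠ 0) : G.Adj v u := by
  by_contra hvu
  exact h (if_neg hvu)

theorem sum_stepProb {v : V} (hv : ¬G.IsIsolated v) : ∑ u, stepProb G v u = 1 := by
  simp_rw [stepProb_eq_degree, ← sum_filter, sum_const, ← SimpleGraph.neighborFinset_eq_filter,
    SimpleGraph.card_neighborFinset_eq_degree, nsmul_eq_mul]
  exact ENNReal.mul_inv_cancel (by simpa [SimpleGraph.degree_eq_zero] using hv)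
    (ENNReal.natCast_ne_top _)

theorem stepProb_map (φ : G ≃g G) (a b : V) : stepProb G (φ a) (φ b) = stepProb G a b := by
  simp only [stepProb_eq_degree, φ.map_adj_iff, φ.degree_eq]

end Steps

section Trajectories

theorem trajProb_append (v : V) {s r : ℕ} (w₁ : Fin s → V) (w₂ : Fin r → V) :
    trajProb G v (Fin.append w₁ w₂) = trajProb G v w₁ * trajProb G (vAt v w₁ s) w₂ := by
  rw [trajProb, Fin.prod_univ_add]
  congr 1 <;> refine prod_congr rfl fun i _ => ?_
  · simp only [Fin.val_castAdd, Fin.append_left, vAt_append_left v w₁ w₂ i.2.le]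
  · simp only [Fin.val_natAdd, Fin.append_right, vAt_append_right v w₁ w₂ i.2.le]

theorem adj_vAt_succ {v : V} {t : ℕ} {w : Fin t → V} (hw : trajProb G v w ≠ 0) {i : ℕ}
    (hi : i < t) : G.Adj (vAt v w i) (vAt v w (i + 1)) := by
  rw [vAt_succ v w hi]
  exact adj_of_stepProb_ne_zero (prod_ne_zero_iff.1 hw ⟨i, hi⟩ (mem_univ _))

theorem trajProb_map (φ : G ≃g G) (v : V) {t : ℕ} (w : Fin t → V) :
    trajProb G (φ v) (φ ∘ w) = trajProb G v w := by
  simp only [trajProb, vAt_comp, Function.comp_apply, stepProb_map]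

end Trajectories

section Events

variable {v : V} {t : ℕ}

theorem pr_congr {A B : (Fin t → V) → Prop} (h : ∀ w, trajProb G v w ≠ 0 → (A w ↔ B w)) :
    pr G v t A = pr G v t B := by
  refine sum_congr rfl fun w _ => ?_
  by_cases hw : trajProb G v w = 0
  · simp [hw]
  · simp only [h w hw]

theorem pr_mono {A B : (Fin t → V) → Prop} (h : ∀ w, A w → B w) : pr G v t A ≤ pr G v t B :=
  sum_le_sum fun w _ => by by_cases hA : A w <;> simp [hA, h w]

theorem pr_ne_zero {A : (Fin t → V) → Prop} {w : Fin t → V} (hA : A w)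
    (hw : trajProb G v w ≠ 0) : pr G v t A ≠ 0 := fun h0 =>
  hw (by simpa [hA] using sum_eq_zero_iff.1 h0 w (mem_univ _))

theorem pr_and_add_pr_and_not (A C : (Fin t → V) → Prop) :
    pr G v t (fun w => A w ∧ C w) + pr G v t (fun w => A w ∧ ¬C w) = pr G v t A := by
  rw [pr, pr, ← sum_add_distrib]
  refine sum_congr rfl fun w _ => ?_
  by_cases hA : A w <;> by_cases hC : C w <;> simp [hA, hC]

theorem sum_pr_and_eq_mul {α : Type} [Fintype α] (A : (Fin t → V) → Prop)
    (g : (Fin t → V) → α) (F : α → ℝ≥0∞) :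
    ∑ x, pr G v t (fun w => A w ∧ g w = x) * F x =
      ∑ w, (if A w then trajProb G v w else 0) * F (g w) := by
  simp_rw [pr, sum_mul]
  rw [sum_comm]
  refine sum_congr rfl fun w _ => ?_
  by_cases hA : A w <;> simp [hA]

theorem sum_pr_and_eq {α : Type} [Fintype α] (A : (Fin t → V) → Prop) (g : (Fin t → V) → α) :
    ∑ x, pr G v t (fun w => A w ∧ g w = x) = pr G v t A := by
  simpa [pr] using sum_pr_and_eq_mul (G := G) (v := v) A g 1

/-- The Markov property at the deterministic time `s`. -/
theorem pr_add_eq_sum (v : V) {s r : ℕ} {A : (Fin (s + r) → V) → Prop}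
    (B : (Fin s → V) → Prop) (C : V → (Fin r → V) → Prop)
    (hA : ∀ w₁ w₂, A (Fin.append w₁ w₂) ↔ B w₁ ∧ C (vAt v w₁ s) w₂) :
    pr G v (s + r) A = ∑ x, pr G v s (fun w => B w ∧ vAt v w s = x) * pr G x r (C x) := by
  rw [sum_pr_and_eq_mul, pr, ← (Fin.appendEquiv s r).sum_comp, Fintype.sum_prod_type]
  refine sum_congr rfl fun w₁ _ => ?_
  rw [pr, mul_sum]
  refine sum_congr rfl fun w₂ _ => ?_
  change (if A (Fin.append w₁ w₂) then trajProb G v (Fin.append w₁ w₂) else 0) = _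
  rw [trajProb_append]
  by_cases hB : B w₁ <;> by_cases hC : C (vAt v w₁ s) w₂ <;> simp [hA, hB, hC]

theorem pr_one_true (v : V) : pr G v 1 (fun _ => True) = ∑ u, stepProb G v u := by
  rw [pr, ← (Equiv.funUnique (Fin 1) V).symm.sum_comp]
  simp only [if_true]
  refine sum_congr rfl fun u _ => ?_
  simp only [trajProb, Fin.prod_univ_one]
  rfl

theorem pr_true (hG : ∀ x, ¬G.IsIsolated x) (v : V) (t : ℕ) : pr G v t (fun _ => True) = 1 := by
  induction t with
  | zero => simp [pr, trajProb]
  | succ t ih =>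
    rw [pr_add_eq_sum v (fun _ => True) (fun _ _ => True) fun _ _ => by simp]
    simp_rw [pr_one_true, sum_stepProb (hG _), mul_one, sum_pr_and_eq, ih]

theorem pr_le_one (hG : ∀ x, ¬G.IsIsolated x) (A : (Fin t → V) → Prop) : pr G v t A ≤ 1 :=
  pr_true hG v t ▸ pr_mono fun _ _ => trivial

theorem pr_add_eq_of_iff (hG : ∀ x, ¬G.IsIsolated x) (v : V) {s r : ℕ}
    {A : (Fin (s + r) → V) → Prop} (B : (Fin s → V) → Prop)
    (hA : ∀ w₁ w₂, A (Fin.append w₁ w₂) ↔ B w₁) : pr G v (s + r) A = pr G v s B := by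
  rw [pr_add_eq_sum v B (fun _ _ => True) fun w₁ w₂ => by simp [hA]]
  simp_rw [pr_true hG, mul_one, sum_pr_and_eq]

theorem pr_eq_add_sum_firstEntry (u : V) (A : (Fin t → V) → Prop) (S : Set V) (k : ℕ) :
    pr G u t A = pr G u t (fun w => A w ∧ ∀ i < k, vAt u w i ∉ S) +
      ∑ s ∈ range k, pr G u t (fun w => A w ∧ (∀ i < s, vAt u w i ∉ S) ∧ vAt u w s ∈ S) := by
  induction k with
  | zero => simp
  | succ k ih =>
    rw [ih, sum_range_succ, ← add_assoc, add_right_comm,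
      ← pr_and_add_pr_and_not (fun w => A w ∧ ∀ i < k, vAt u w i ∉ S) (vAt u · k ∈ S)]
    simp only [Nat.forall_lt_succ_right, and_assoc]
    ac_rfl

theorem pr_map (φ : G ≃g G) (v : V) (t : ℕ) (A : (Fin t → V) → Prop) :
    pr G (φ v) t A = pr G v t (fun w => A (φ ∘ w)) :=
  (Fintype.sum_equiv ((Equiv.refl (Fin t)).arrowCongr φ.toEquiv) _ _ fun w => by
    rw [← trajProb_map φ v w]; rfl).symm

end Events

section Survival

noncomputable def survival (G : SimpleGraph V) (v : V) (S : Set V) (t : ℕ) : ℝ≥0∞ :=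
  pr G v t (fun w => ∀ s ≤ t, vAt v w s ∉ S)

theorem hitSet_eq_tsum_survival (v : V) (S : Set V) :
    hitSet G v S = ∑' t, survival G v S t := rfl

variable {S : Set V}

theorem survival_add (u : V) (s r : ℕ) :
    survival G u S (s + r) =
      ∑ x, pr G u s (fun w => (∀ i ≤ s, vAt u w i ∉ S) ∧ vAt u w s = x) * survival G x S r :=
  pr_add_eq_sum u _ (fun x w => ∀ j ≤ r, vAt x w j ∉ S) fun w₁ w₂ =>
    forall_le_vAt_append_iff (· ∉ S) u w₁ w₂

theorem survival_add_le_mul (u : V) (s : ℕ) {r : ℕ} {δ : ℝ≥0∞}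
    (hδ : ∀ y, survival G y S r ≤ δ) : survival G u S (s + r) ≤ survival G u S s * δ := by
  rw [survival_add, survival, ← sum_pr_and_eq _ fun w => vAt u w s, sum_mul]
  gcongr with x
  exact hδ x

theorem survival_antitone (hG : ∀ x, ¬G.IsIsolated x) (u : V) : Antitone (survival G u S) :=
  antitone_nat_of_succ_le fun t => by
    simpa using survival_add_le_mul u t fun y => pr_le_one hG (t := 1) _

theorem survival_length_lt_one (hG : ∀ x, ¬G.IsIsolated x) {y x : V} (p : G.Walk y x)
    (hx : x ∈ S) : survival G y S p.length < 1 := by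
  set w : Fin p.length → V := fun i => p.getVert (i + 1)
  have hvAt : ∀ k ≤ p.length, vAt y w k = p.getVert k := by
    rintro (_ | k) hk
    · exact p.getVert_zero.symm
    · exact vAt_succ y w hk
  have hw : trajProb G y w ≠ 0 := prod_ne_zero_iff.2 fun i _ => by
    rw [hvAt i i.2.le]
    exact stepProb_ne_zero (p.adj_getVert_succ i.2)
  have hhit : pr G y p.length (fun w => ¬∀ s ≤ p.length, vAt y w s ∉ S) ≠ 0 :=
    pr_ne_zero (fun h => h p.length le_rfl (by rwa [hvAt _ le_rfl, p.getVert_length])) hw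
  have htotal := pr_and_add_pr_and_not (G := G) (v := y) (t := p.length) (fun _ => True)
    fun w => ∀ s ≤ p.length, vAt y w s ∉ S
  simp only [true_and, pr_true hG] at htotal
  rw [survival, ← htotal]
  exact ENNReal.lt_add_right (ne_top_of_le_ne_top ENNReal.one_ne_top (pr_le_one hG _)) hhit

theorem hitSet_ne_top [Nontrivial V] (hconn : G.Connected) (hS : S.Nonempty) (u : V) :
    hitSet G u S ≠ ⊤ := by
  have hG : ∀ x, ¬G.IsIsolated x := hconn.preconnected.not_isIsolated
  obtain ⟨x, hx⟩ := hS
  set n := Fintype.card V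
  set δ := univ.sup fun y => survival G y S n
  have hδ : δ < 1 := (Finset.sup_lt_iff (by simp)).2 fun y _ => by
    obtain ⟨p⟩ := hconn.preconnected y x
    exact (survival_antitone hG y p.bypass_isPath.length_lt.le).trans_lt
      (survival_length_lt_one hG p.bypass hx)
  have hpow : ∀ k, survival G u S (k * n) ≤ δ ^ k := by
    intro k
    induction k with
    | zero =>
      rw [zero_mul, pow_zero]
      exact pr_le_one hG _
    | succ k ih =>
      rw [Nat.succ_mul, pow_succ]
      exact (survival_add_le_mul u _ fun y => le_sup (f := fun y => survival G y S n)
        (mem_univ y)).trans (by gcongr)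
  refine ne_top_of_le_ne_top (ENNReal.tsum_pow_div_ne_top hδ (Fintype.card_ne_zero (α := V)))
    (ENNReal.tsum_le_tsum fun t => ?_)
  exact (survival_antitone hG u (Nat.div_mul_le_self t n)).trans (hpow _)

theorem survival_map (φ : G ≃g G) (v : V) (t : ℕ) :
    survival G (φ v) (φ '' S) t = survival G v S t := by
  simp only [survival, pr_map, vAt_comp, φ.injective.mem_set_image]

theorem hit_map (φ : G ≃g G) (x y : V) : hit G (φ x) (φ y) = hit G x y := by
  simp only [hit, hitSet_eq_tsum_survival, ← Set.image_singleton, survival_map]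

theorem hit_eq_of_adj (htrans : ArcTransitive G) {v w x : V} (hw : G.Adj w v)
    (hx : G.Adj x v) : hit G x v = hit G w v := by
  obtain ⟨φ, hφw, hφv⟩ := htrans hw hx
  rw [← hφw, ← hit_map φ w v, hφv]

end Survival

section FirstEntrance

/-- `entryProb G u S s x = P_u(τ_S = s, X(s) = x)`, with `τ_S` the first entrance time into `S`. -/
noncomputable def entryProb (G : SimpleGraph V) (u : V) (S : Set V) (s : ℕ) (x : V) : ℝ≥0∞ :=
  pr G u s (fun w => ((∀ i < s, vAt u w i ∉ S) ∧ vAt u w s ∈ S) ∧ vAt u w s = x)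

noncomputable def hitDist (G : SimpleGraph V) (u : V) (S : Set V) (x : V) : ℝ≥0∞ :=
  ∑' s, entryProb G u S s x

variable {u : V} {S T : Set V}

theorem forall_le_notMem_of_forall_lt_notMem (hu : u ∉ T)
    (hST : ∀ x y, G.Adj x y → y ∈ T → x ∈ S) {t : ℕ} {w : Fin t → V}
    (hw : trajProb G u w ≠ 0) {s : ℕ} (hs : s ≤ t)
    (hS : ∀ i < s, vAt u w i ∉ S) : ∀ i ≤ s, vAt u w i ∉ T
  | 0, _ => hu
  | i + 1, hi => fun hT => hS i hi (hST _ _ (adj_vAt_succ hw (by omega)) hT)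

theorem survival_eq_add_sum_entryProb (hu : u ∉ T) (hST : ∀ x y, G.Adj x y → y ∈ T → x ∈ S)
    (t : ℕ) :
    survival G u T t = survival G u S t +
      ∑ p ∈ antidiagonal t, ∑ x, entryProb G u S p.1 x * survival G x T p.2 := by
  rw [survival, pr_eq_add_sum_firstEntry u _ S (t + 1), Nat.sum_antidiagonal_eq_sum_range_succ_mk]
  congr 1
  · refine pr_congr fun w hw => ⟨fun h i hi => h.2 i (Nat.lt_succ_of_le hi), fun h => ?_⟩
    have hS : ∀ i < t + 1, vAt u w i ∉ S := fun i hi => h i (Nat.le_of_lt_succ hi)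
    exact ⟨forall_le_notMem_of_forall_lt_notMem hu hST hw le_rfl fun i hi => hS i (by omega), hS⟩
  refine sum_congr rfl fun s hs => ?_
  obtain ⟨r, rfl⟩ := Nat.exists_eq_add_of_le (Nat.lt_succ_iff.1 (mem_range.1 hs))
  rw [Nat.add_sub_cancel_left, pr_congr (B := fun w => ((∀ i < s, vAt u w i ∉ S) ∧
    vAt u w s ∈ S) ∧ ∀ j ≤ r, vAt u w (s + j) ∉ T)]
  · refine pr_add_eq_sum u _ (fun x w => ∀ j ≤ r, vAt x w j ∉ T) fun w₁ w₂ => ?_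
    rw [vAt_append_left u w₁ w₂ le_rfl]
    refine and_congr (and_congr (forall₂_congr fun i hi => ?_) Iff.rfl)
      (forall₂_congr fun j hj => ?_)
    · rw [vAt_append_left u w₁ w₂ hi.le]
    · rw [vAt_append_right u w₁ w₂ hj]
  · refine fun w hw => ⟨fun ⟨hT, hS⟩ => ⟨hS, fun j hj => hT (s + j) (by omega)⟩,
      fun ⟨hS, hT⟩ => ⟨fun i hi => ?_, hS⟩⟩
    rcases le_or_gt i s with his | his
    · exact forall_le_notMem_of_forall_lt_notMem hu hST hw (by omega) hS.1 i his
    · obtain ⟨j, rfl⟩ := Nat.exists_eq_add_of_le his.le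
      exact hT j (by omega)

theorem hitSet_eq_add_sum_hitDist (hu : u ∉ T) (hST : ∀ x y, G.Adj x y → y ∈ T → x ∈ S) :
    hitSet G u T = hitSet G u S + ∑ x, hitDist G u S x * hitSet G x T := by
  calc hitSet G u T
      = ∑' t, (survival G u S t +
          ∑ p ∈ antidiagonal t, ∑ x, entryProb G u S p.1 x * survival G x T p.2) :=
        tsum_congr (survival_eq_add_sum_entryProb hu hST)
    _ = hitSet G u S +
          ∑ x, ∑' t, ∑ p ∈ antidiagonal t, entryProb G u S p.1 x * survival G x T p.2 := by
        rw [ENNReal.tsum_add, ← Summable.tsum_finsetSum fun _ _ => ENNReal.summable]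
        simp_rw [sum_comm (s := antidiagonal _)]
        rfl
    _ = hitSet G u S + ∑ x, hitDist G u S x * hitSet G x T := by
        simp_rw [hitDist, hitSet_eq_tsum_survival, ENNReal.tsum_mul_tsum_eq_tsum_sum_antidiagonal]

theorem hitDist_eq_zero {x : V} (hx : x ∉ S) : hitDist G u S x = 0 := by
  refine ENNReal.tsum_eq_zero.2 fun s => sum_eq_zero fun w _ => if_neg ?_
  rintro ⟨⟨-, hS⟩, rfl⟩
  exact hx hS

theorem pr_forall_lt_succ_notMem (hG : ∀ x, ¬G.IsIsolated x) (k : ℕ) :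
    pr G u (k + 1) (fun w => ∀ i < k + 1, vAt u w i ∉ S) = survival G u S k :=
  pr_add_eq_of_iff hG u _ fun w₁ w₂ => by
    simp only [Nat.lt_add_one_iff]
    exact forall₂_congr fun i hi => by rw [vAt_append_left u w₁ w₂ hi]

theorem sum_entryProb_add_pr (hG : ∀ x, ¬G.IsIsolated x) (k : ℕ) :
    ∑ s ∈ range k, ∑ x, entryProb G u S s x +
      pr G u k (fun w => ∀ i < k, vAt u w i ∉ S) = 1 := by
  induction k with
  | zero => simpa using pr_true hG u 0
  | succ k ih =>
    rw [sum_range_succ, add_assoc, pr_forall_lt_succ_notMem hG, ← ih]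
    congr 1
    simp only [entryProb, sum_pr_and_eq, survival, ← Nat.lt_add_one_iff,
      Nat.forall_lt_succ_right]
    exact pr_and_add_pr_and_not _ _

theorem sum_hitDist (hG : ∀ x, ¬G.IsIsolated x) (hfin : hitSet G u S ≠ ⊤) :
    ∑ x, hitDist G u S x = 1 := by
  have htail : Tendsto (fun k => pr G u (k + 1) fun w => ∀ i < k + 1, vAt u w i ∉ S)
      atTop (𝓝 0) := by
    simpa only [pr_forall_lt_succ_notMem hG] using
      ENNReal.tendsto_atTop_zero_of_tsum_ne_top (f := survival G u S) hfin
  have hlim := ((ENNReal.tendsto_nat_tsum fun s => ∑ x, entryProb G u S s x).comp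
    (tendsto_add_atTop_nat 1)).add htail
  simp only [Function.comp_apply, sum_entryProb_add_pr hG, add_zero] at hlim
  unfold hitDist
  rw [← Summable.tsum_finsetSum fun _ _ => ENNReal.summable]
  exact tendsto_nhds_unique hlim tendsto_const_nhds

theorem hit_eq_radioHit_add_hit [Nontrivial V] (hconn : G.Connected)
    (htrans : ArcTransitive G) {u v w : V} (huv : u ≠ v) (hw : G.Adj w v) :
    hit G u v = radioHit G u v + hit G w v := by
  have hentry : ∀ x y, G.Adj x y → y ∈ ({v} : Set V) → x ∈ G.neighborSet v := by
    rintro x y hxy rfl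
    exact hxy.symm
  have hconst : ∀ x, hitDist G u (G.neighborSet v) x * hitSet G x {v} =
      hitDist G u (G.neighborSet v) x * hit G w v := fun x => by
    by_cases hx : G.Adj v x
    · rw [← hit, hit_eq_of_adj htrans hw hx.symm]
    · rw [hitDist_eq_zero (S := G.neighborSet v) hx, zero_mul, zero_mul]
  rw [hit, hitSet_eq_add_sum_hitDist (T := {v}) huv hentry, sum_congr rfl fun x _ => hconst x,
    ← sum_mul, sum_hitDist hconn.preconnected.not_isIsolated
      (hitSet_ne_top (S := G.neighborSet v) hconn ⟨w, hw.symm⟩ u), one_mul]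
  rfl

end FirstEntrance

end GraphWalk

open GraphWalk

theorem arcTransitive_radioHit_general
    (V : Type) [Fintype V] (G : SimpleGraph V)
    (hconn : G.Connected) (htrans : ArcTransitive G)
    (u v w : V) (huv : u ≠ v) (hw : G.Adj w v) :
    GraphWalk.radioHit G u v = GraphWalk.hit G u v - GraphWalk.hit G w v := by
  have : Nontrivial V := ⟨⟨u, v, huv⟩⟩
  have hfin : hit G w v ≠ ⊤ := hitSet_ne_top hconn (Set.singleton_nonempty v) w
  rw [hit_eq_radioHit_add_hit hconn htrans huv hw, ENNReal.add_sub_cancel_right hfin]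

/-- In a finite connected arc-transitive graph `G`, for distinct
vertices `u, v` and any neighbor `w` of `v`, the radio hitting time of the random walk
on the radio hypergraph `R(G)` satisfies `h̃(u,v) = h(u,v) - h(w,v)`. -/
theorem arcTransitive_radioHit
    (V : Type) [Fintype V] [DecidableEq V] (G : SimpleGraph V)
    (hconn : G.Connected) (htrans : ArcTransitive G)
    (u v w : V) (huv : u ≠ v) (hw : G.Adj w v) :
    GraphWalk.radioHit G u v = GraphWalk.hit G u v - GraphWalk.hit G w v :=
  arcTransitive_radioHit_general V G hconn htrans u v w huv hw
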